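/- arXiv:1910.13378 — 5 statements merged into one kernel-verified Lean document; each statement's English description precedes it below -/
import Mathlib

section
/- For all positive integers a, b, c, the map Φ (sending a plane partition π to the matrix (d_{iℓ}) with d_{iℓ} = #{j : π_{ij} = ℓ > π_{i+1,j}}) restricts to a bijection from PP(a,b,c) onto BM(a,b,c); in particular |PP(a,b,c)| = |BM(a,b,c)|. -/
open scoped BigOperators

/-- A plane partition: a matrix of naturals (0-indexed) with weakly decreasing rows and
columns and finitely many nonzero entries. -/
structure PlanePartition where
  entry : ℕ → ℕ → ℕ
  row_decr : ∀ i j, entry i (j + 1) ≤ entry i j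
  col_decr : ∀ i j, entry (i + 1) j ≤ entry i j
  finite_support : {p : ℕ × ℕ | entry p.1 p.2 ≠ 0}.Finite

namespace PlanePartition

/-- `π` has at most `b` (nonzero) rows. -/
def rowsLE (π : PlanePartition) (b : ℕ) : Prop := ∀ i j, b ≤ i → π.entry i j = 0

/-- `π` has at most `a` (nonzero) columns. -/
def colsLE (π : PlanePartition) (a : ℕ) : Prop := ∀ i j, a ≤ j → π.entry i j = 0

/-- all entries of `π` are at most `c`. -/
def entriesLE (π : PlanePartition) (c : ℕ) : Prop := ∀ i j, π.entry i j ≤ c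

/-- the number of columns of `π` containing the entry `ℓ`. -/
noncomputable def cCol (π : PlanePartition) (ℓ : ℕ) : ℕ :=
  {j | ∃ i, π.entry i j = ℓ}.ncard

/-- the length of the `i`-th row of `π` (0-indexed); this is the `(i+1)`-st part of
the shape of `π`. -/
noncomputable def rowLen (π : PlanePartition) (i : ℕ) : ℕ :=
  {j | 0 < π.entry i j}.ncard

/-- `d_{iℓ} = #{j : π_{ij} = ℓ > π_{i+1,j}}`; the row index `i` is 0-indexed
while `ℓ` denotes the actual value. -/
noncomputable def phi (π : PlanePartition) (i ℓ : ℕ) : ℕ :=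
  {j | π.entry i j = ℓ ∧ π.entry (i + 1) j < ℓ}.ncard

/-- `Φ(π)` as a 0-indexed matrix: entry `(i, l)` counts `j` with `π_{ij} = l+1 > π_{i+1,j}`. -/
noncomputable def phiMatrix (π : PlanePartition) : ℕ → ℕ → ℕ :=
  fun i l => π.phi i (l + 1)

/-- `π` has shape `μ`. -/
def hasShape (π : PlanePartition) (μ : YoungDiagram) : Prop :=
  ∀ i j, 0 < π.entry i j ↔ (i, j) ∈ μ

/-- the descent set of `π` (0-indexed positions). -/
def des (π : PlanePartition) : Set (ℕ × ℕ) :=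
  {p | π.entry (p.1 + 1) p.2 < π.entry p.1 p.2}

end PlanePartition

/-- the set of plane partitions with at most `a` columns, at most `b` rows
and entries at most `c`. -/
def PP (a b c : ℕ) : Set PlanePartition :=
  {π | π.colsLE a ∧ π.rowsLE b ∧ π.entriesLE c}

/-- `PP(∞, b, c)`: plane partitions with at most `b` rows and entries at most `c`. -/
def PPinf (b c : ℕ) : Set PlanePartition :=
  {π | π.rowsLE b ∧ π.entriesLE c}

/-- a monotone lattice path (as a list of points) from `s` to `t`. -/
def IsMonPath (L : List (ℕ × ℕ)) (s t : ℕ × ℕ) : Prop :=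
  L.head? = some s ∧ L.getLast? = some t ∧
    L.Chain' fun p q => q = (p.1 + 1, p.2) ∨ q = (p.1, p.2 + 1)

/-- the last passage time: the maximal weight of a monotone path from `s` to `t`
in the matrix `d`. -/
noncomputable def lastPassage (d : ℕ → ℕ → ℕ) (s t : ℕ × ℕ) : ℕ :=
  sSup {n | ∃ L, IsMonPath L s t ∧ n = (L.map fun p => d p.1 p.2).sum}

/-- `b×c` matrices of naturals (as functions vanishing off `[0,b) × [0,c)`) whose
last passage time `G(b,c)` is at most `a`. -/
def BM (a b c : ℕ) : Set (ℕ → ℕ → ℕ) :=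
  {d | (∀ i j, b ≤ i → d i j = 0) ∧ (∀ i j, c ≤ j → d i j = 0) ∧
    lastPassage d (0, 0) (b - 1, c - 1) ≤ a}

/-- the rectangular Young diagram of the partition `(a^b)` (with `b` rows of length `a`). -/
def rectDiagram (a b : ℕ) : YoungDiagram where
  cells := Finset.range b ×ˢ Finset.range a
  isLowerSet := by
    intro p q hle hp
    simp only [Finset.coe_product, Set.mem_prod, Finset.mem_coe, Finset.mem_range] at hp ⊢
    exact ⟨lt_of_le_of_lt hle.1 hp.1, lt_of_le_of_lt hle.2 hp.2⟩

/-- the variables `(1^b, x_1, x_2, …)`: the first `b` variables are specialized to `1`. -/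
def oneExtend (b : ℕ) (x : ℕ → ℝ) : ℕ → ℝ :=
  fun i => if i < b then 1 else x (i - b)

/-- the Schur polynomial `s_μ(x_1, …, x_N)` evaluated at real arguments;
variables are 0-indexed (`x ℓ` is the variable `x_{ℓ+1}`), as are tableau entries. -/
noncomputable def schur (μ : YoungDiagram) (N : ℕ) (x : ℕ → ℝ) : ℝ :=
  ∑ᶠ T ∈ {T : SemistandardYoungTableau μ | ∀ i j, (i, j) ∈ μ → T i j < N},
    ∏ p ∈ μ.cells, x (T p.1 p.2)

/-- the dual symmetric Grothendieck polynomial `g_μ(x_1, …, x_n)` evaluated at real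
arguments; variables are 0-indexed (`x ℓ` is the variable `x_{ℓ+1}`). -/
noncomputable def grothG (μ : YoungDiagram) (n : ℕ) (x : ℕ → ℝ) : ℝ :=
  ∑ᶠ π ∈ {π : PlanePartition | π.hasShape μ ∧ π.entriesLE n},
    ∏ ℓ ∈ Finset.range n, x ℓ ^ π.cCol (ℓ + 1)

/-- the elementary symmetric polynomial `e_m(x_1, …, x_n)` evaluated at real arguments. -/
noncomputable def esym (n : ℕ) (x : ℕ → ℝ) (m : ℕ) : ℝ :=
  ∑ S ∈ (Finset.range n).powersetCard m, ∏ i ∈ S, x i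

/-- `e_m` for an integer index `m`, with `e_m = 0` for `m < 0`. -/
noncomputable def esymZ (n : ℕ) (x : ℕ → ℝ) (m : ℤ) : ℝ :=
  if 0 ≤ m then esym n x m.toNat else 0

/-- the weight `∏_{(i,j) ∈ Des(π)} q_{π_{ij}}`; the parameters are 0-indexed
(`q ℓ` is the parameter `q_{ℓ+1}`). -/
noncomputable def desWeight (π : PlanePartition) (q : ℕ → ℝ) : ℝ :=
  ∏ᶠ p ∈ π.des, q (π.entry p.1 p.2 - 1)

/-- the probability of a configuration `w` of a `b×c` matrix of i.i.d. Geom(q) entries,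
where `P(entry = k) = (1-q) qᵏ`. -/
noncomputable def geomWeight (q : ℝ) (b c : ℕ) (w : Fin b × Fin c → ℕ) : ℝ :=
  ∏ p : Fin b × Fin c, ((1 - q) * q ^ w p)

/-- extend a `b×c` matrix to an `ℕ × ℕ`-indexed matrix by zero. -/
def matExt {b c : ℕ} (w : Fin b × Fin c → ℕ) : ℕ → ℕ → ℕ :=
  fun i j => if h : i < b ∧ j < c then w (⟨i, h.1⟩, ⟨j, h.2⟩) else 0



namespace PPaux

lemma mem_iff_lt_ncard {S : Set ℕ} (hS : S.Finite)
    (hdc : ∀ x ∈ S, ∀ y, y ≤ x → y ∈ S) (j : ℕ) : j ∈ S ↔ j < S.ncard := by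
  rcases S.eq_empty_or_nonempty with h | h
  · simp [h]
  · have hmem : sSup S ∈ S := h.csSup_mem hS
    have hIic : S = Set.Iic (sSup S) := by
      ext x
      constructor
      · exact fun hx => le_csSup hS.bddAbove hx
      · exact fun hx => hdc _ hmem _ hx
    rw [hIic, ← Finset.coe_Iic, Set.ncard_coe_finset, Nat.card_Iic]
    simp

lemma ncard_Iio (n : ℕ) : (Set.Iio n).ncard = n := by
  rw [← Finset.coe_range, Set.ncard_coe_finset, Finset.card_range]

lemma ncard_Ico (a b : ℕ) : (Set.Ico a b).ncard = b - a := by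
  rw [← Finset.coe_Ico, Set.ncard_coe_finset, Nat.card_Ico]

/-- the conjugate `F` of the rows of a plane partition. -/
noncomputable def Fpi (π : PlanePartition) (i l : ℕ) : ℕ := {j | l < π.entry i j}.ncard

lemma row_finite (π : PlanePartition) (i : ℕ) : {j | π.entry i j ≠ 0}.Finite := by
  have hsub : {j | π.entry i j ≠ 0} ⊆ Prod.snd '' {p : ℕ × ℕ | π.entry p.1 p.2 ≠ 0} :=
    fun j hj => ⟨(i, j), hj, rfl⟩
  exact (π.finite_support.image _).subset hsub

lemma Fpi_set_finite (π : PlanePartition) (i l : ℕ) : {j | l < π.entry i j}.Finite :=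
  (row_finite π i).subset (fun j hj => by simp at hj ⊢; omega)

lemma lt_Fpi_iff (π : PlanePartition) (i l j : ℕ) : j < Fpi π i l ↔ l < π.entry i j := by
  have hanti : Antitone (π.entry i) := antitone_nat_of_succ_le (π.row_decr i)
  have := mem_iff_lt_ncard (S := {j | l < π.entry i j}) (Fpi_set_finite π i l)
    (fun x hx y hy => lt_of_lt_of_le hx (hanti hy)) j
  simpa [Fpi] using this.symm

lemma Fpi_succ_le (π : PlanePartition) (i l : ℕ) : Fpi π i (l + 1) ≤ Fpi π i l := by
  by_contra h
  push_neg at h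
  have h1 := (lt_Fpi_iff π i (l + 1) (Fpi π i l)).mp h
  have h2 := (lt_Fpi_iff π i l (Fpi π i l)).mpr (by omega)
  omega

lemma Fpi_row_le (π : PlanePartition) (i l : ℕ) : Fpi π (i + 1) l ≤ Fpi π i l := by
  by_contra h
  push_neg at h
  have h1 := (lt_Fpi_iff π (i + 1) l (Fpi π i l)).mp h
  have h2 := (lt_Fpi_iff π i l (Fpi π i l)).mpr (lt_of_lt_of_le h1 (π.col_decr i _))
  omega

/-- the key recursion: `Φ(π)` entries measure the difference of consecutive `F` values. -/
lemma Fpi_rec (π : PlanePartition) (i l : ℕ) :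
    Fpi π i l = π.phiMatrix i l + max (Fpi π i (l + 1)) (Fpi π (i + 1) l) := by
  set M := max (Fpi π i (l + 1)) (Fpi π (i + 1) l) with hM
  have hMle : M ≤ Fpi π i l := max_le (Fpi_succ_le π i l) (Fpi_row_le π i l)
  have hset : {j | π.entry i j = l + 1 ∧ π.entry (i + 1) j < l + 1} = Set.Ico M (Fpi π i l) := by
    ext j
    simp only [Set.mem_setOf_eq, Set.mem_Ico, hM, max_le_iff]
    have h1 := lt_Fpi_iff π i l j
    have h2 := lt_Fpi_iff π i (l + 1) j
    have h3 := lt_Fpi_iff π (i + 1) l j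
    omega
  have : π.phiMatrix i l = Fpi π i l - M := by
    rw [PlanePartition.phiMatrix, PlanePartition.phi, hset, ncard_Ico]
  omega

lemma Fpi_zero {π : PlanePartition} {b c : ℕ} (hrows : π.rowsLE b) (hent : π.entriesLE c)
    (i l : ℕ) (h : b ≤ i ∨ c ≤ l) : Fpi π i l = 0 := by
  have : {j | l < π.entry i j} = ∅ := by
    ext j
    simp only [Set.mem_setOf_eq, Set.mem_empty_iff_false, iff_false, not_lt]
    rcases h with h | h
    · rw [hrows i j h]; omega
    · exact le_trans (hent i j) h
  rw [Fpi, this]; simp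

end PPaux
namespace PPaux

lemma F_unique {b c : ℕ} {d F F' : ℕ → ℕ → ℕ}
    (hR : ∀ i l, F i l = d i l + max (F i (l + 1)) (F (i + 1) l))
    (hR' : ∀ i l, F' i l = d i l + max (F' i (l + 1)) (F' (i + 1) l))
    (hZ : ∀ i l, b ≤ i ∨ c ≤ l → F i l = 0)
    (hZ' : ∀ i l, b ≤ i ∨ c ≤ l → F' i l = 0) :
    ∀ i l, F i l = F' i l := by
  have key : ∀ n i l, (b - i) + (c - l) ≤ n → F i l = F' i l := by
    intro n
    induction n with
    | zero => intro i l h; rw [hZ i l (by omega), hZ' i l (by omega)]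
    | succ n ih =>
      intro i l h
      by_cases hbc : b ≤ i ∨ c ≤ l
      · rw [hZ i l hbc, hZ' i l hbc]
      · push_neg at hbc
        rw [hR i l, hR' i l, ih i (l + 1) (by omega), ih (i + 1) l (by omega)]
  exact fun i l => key ((b - i) + (c - l)) i l le_rfl

def buildF (b c : ℕ) (d : ℕ → ℕ → ℕ) (i l : ℕ) : ℕ :=
  if h : i < b ∧ l < c then
    d i l + max (buildF b c d i (l + 1)) (buildF b c d (i + 1) l)
  else 0
termination_by (b - i) + (c - l)
decreasing_by all_goals omega

lemma buildF_zero (b c : ℕ) (d : ℕ → ℕ → ℕ) (i l : ℕ) (h : b ≤ i ∨ c ≤ l) :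
    buildF b c d i l = 0 := by
  rw [buildF, dif_neg (by omega)]

lemma buildF_rec (b c : ℕ) (d : ℕ → ℕ → ℕ) (hd : ∀ i l, b ≤ i ∨ c ≤ l → d i l = 0) (i l : ℕ) :
    buildF b c d i l = d i l + max (buildF b c d i (l + 1)) (buildF b c d (i + 1) l) := by
  by_cases h : i < b ∧ l < c
  · rw [buildF, dif_pos h]
  · rw [buildF_zero b c d i l (by omega), hd i l (by omega),
      buildF_zero b c d i (l + 1) (by omega), buildF_zero b c d (i + 1) l (by omega)]
    simp

lemma buildF_succ_le (b c : ℕ) (d : ℕ → ℕ → ℕ) (i l : ℕ) :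
    buildF b c d i (l + 1) ≤ buildF b c d i l := by
  by_cases h : i < b ∧ l < c
  · have hrw : buildF b c d i l
        = d i l + max (buildF b c d i (l + 1)) (buildF b c d (i + 1) l) := by
      conv_lhs => rw [buildF]
      rw [dif_pos h]
    omega
  · rw [buildF_zero b c d i (l + 1) (by omega), buildF_zero b c d i l (by omega)]

lemma buildF_row_le (b c : ℕ) (d : ℕ → ℕ → ℕ) (i l : ℕ) :
    buildF b c d (i + 1) l ≤ buildF b c d i l := by
  by_cases h : i < b ∧ l < c
  · have hrw : buildF b c d i l
        = d i l + max (buildF b c d i (l + 1)) (buildF b c d (i + 1) l) := by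
      conv_lhs => rw [buildF]
      rw [dif_pos h]
    omega
  · rw [buildF_zero b c d (i + 1) l (by omega), buildF_zero b c d i l (by omega)]

end PPaux
namespace PPaux

lemma isMonPath_cons {L : List (ℕ × ℕ)} {q t : ℕ × ℕ} (h : IsMonPath L q t) (p : ℕ × ℕ)
    (hpq : q = (p.1 + 1, p.2) ∨ q = (p.1, p.2 + 1)) : IsMonPath (p :: L) p t := by
  obtain ⟨h1, h2, h3⟩ := h
  cases L with
  | nil => simp at h1
  | cons q' M =>
    have hq : q' = q := by simpa using h1
    subst hq
    refine ⟨rfl, ?_, List.isChain_cons_cons.mpr ⟨hpq, h3⟩⟩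
    rw [List.getLast?_cons_cons]
    exact h2

lemma pathSum_le {d F : ℕ → ℕ → ℕ}
    (hR : ∀ i l, F i l = d i l + max (F i (l + 1)) (F (i + 1) l)) :
    ∀ L : List (ℕ × ℕ), ∀ s t : ℕ × ℕ, IsMonPath L s t →
      (L.map fun p => d p.1 p.2).sum ≤ F s.1 s.2 := by
  intro L
  induction L with
  | nil => intro s t h; simp [IsMonPath] at h
  | cons p L ih =>
    intro s t h
    obtain ⟨h1, h2, h3⟩ := h
    have hp : p = s := by simpa using h1
    subst hp
    cases L with
    | nil =>
      have := hR p.1 p.2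
      simp
      omega
    | cons q M =>
      have hc := List.isChain_cons_cons.mp h3
      have hrest : IsMonPath (q :: M) q t := by
        refine ⟨rfl, ?_, hc.2⟩
        rw [← h2, List.getLast?_cons_cons]
      have hsum := ih q t hrest
      have hq : F q.1 q.2 ≤ max (F p.1 (p.2 + 1)) (F (p.1 + 1) p.2) := by
        rcases hc.1 with h | h <;> subst h <;> simp [le_max_left, le_max_right]
      have := hR p.1 p.2
      simp only [List.map_cons, List.sum_cons] at hsum ⊢
      omega

lemma path_exists {d F : ℕ → ℕ → ℕ} {b c : ℕ}
    (hR : ∀ i l, F i l = d i l + max (F i (l + 1)) (F (i + 1) l))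
    (hZ : ∀ i l, b ≤ i ∨ c ≤ l → F i l = 0) :
    ∀ n i l, (b - 1 - i) + (c - 1 - l) ≤ n → i < b → l < c →
      ∃ L, IsMonPath L (i, l) (b - 1, c - 1) ∧ (L.map fun p => d p.1 p.2).sum = F i l := by
  intro n
  induction n with
  | zero =>
    intro i l h hib hlc
    have hi : i = b - 1 := by omega
    have hl : l = c - 1 := by omega
    subst hi; subst hl
    refine ⟨[(b - 1, c - 1)], ⟨rfl, rfl, List.isChain_singleton _⟩, ?_⟩
    have h1 := hZ (b - 1) (c - 1 + 1) (Or.inr (by omega))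
    have h2 := hZ (b - 1 + 1) (c - 1) (Or.inl (by omega))
    have := hR (b - 1) (c - 1)
    simp
    omega
  | succ n ih =>
    intro i l h hib hlc
    by_cases hcorner : i = b - 1 ∧ l = c - 1
    · obtain ⟨hi, hl⟩ := hcorner
      subst hi; subst hl
      refine ⟨[(b - 1, c - 1)], ⟨rfl, rfl, List.isChain_singleton _⟩, ?_⟩
      have h1 := hZ (b - 1) (c - 1 + 1) (Or.inr (by omega))
      have h2 := hZ (b - 1 + 1) (c - 1) (Or.inl (by omega))
      have := hR (b - 1) (c - 1)
      simp
      omega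
    · by_cases hright : l < c - 1 ∧ (i = b - 1 ∨ F (i + 1) l ≤ F i (l + 1))
      · -- move right
        obtain ⟨L, hL, hLsum⟩ := ih i (l + 1) (by omega) hib (by omega)
        refine ⟨(i, l) :: L, isMonPath_cons hL (i, l) (Or.inr rfl), ?_⟩
        have hmax : max (F i (l + 1)) (F (i + 1) l) = F i (l + 1) := by
          rcases hright.2 with h' | h'
          · have := hZ (i + 1) l (Or.inl (by omega))
            omega
          · omega
        have := hR i l
        simp only [List.map_cons, List.sum_cons, hLsum]
        omega
      · -- move down
        have hdown : i < b - 1 := by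
          rcases Nat.lt_or_ge l (c - 1) with h' | h'
          · by_contra hcon
            push_neg at hcon
            exact hright ⟨h', Or.inl (by omega)⟩
          · have hl : l = c - 1 := by omega
            omega
        obtain ⟨L, hL, hLsum⟩ := ih (i + 1) l (by omega) (by omega) hlc
        refine ⟨(i, l) :: L, isMonPath_cons hL (i, l) (Or.inl rfl), ?_⟩
        have hmax : max (F i (l + 1)) (F (i + 1) l) = F (i + 1) l := by
          by_cases hl : l = c - 1
          · have := hZ i (l + 1) (Or.inr (by omega))
            omega
          · have : ¬(i = b - 1 ∨ F (i + 1) l ≤ F i (l + 1)) := fun h' => hright ⟨by omega, h'⟩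
            push_neg at this
            omega
        have := hR i l
        simp only [List.map_cons, List.sum_cons, hLsum]
        omega

lemma lastPassage_eq {d F : ℕ → ℕ → ℕ} {b c : ℕ} (hb : 0 < b) (hc : 0 < c)
    (hR : ∀ i l, F i l = d i l + max (F i (l + 1)) (F (i + 1) l))
    (hZ : ∀ i l, b ≤ i ∨ c ≤ l → F i l = 0) :
    lastPassage d (0, 0) (b - 1, c - 1) = F 0 0 := by
  obtain ⟨L, hL, hsum⟩ := path_exists hR hZ ((b - 1) + (c - 1)) 0 0 (by omega) hb hc
  apply IsGreatest.csSup_eq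
  constructor
  · exact ⟨L, hL, hsum.symm⟩
  · rintro x ⟨L', hL', rfl⟩
    exact pathSum_le hR L' _ _ hL'

end PPaux
namespace PPaux

def entryOf (F : ℕ → ℕ → ℕ) (c : ℕ) (i j : ℕ) : ℕ :=
  ((Finset.range c).filter fun l => j < F i l).card

lemma lt_entryOf_iff {F : ℕ → ℕ → ℕ} {c : ℕ}
    (hmono : ∀ i l, F i (l + 1) ≤ F i l)
    (hZ : ∀ i l, c ≤ l → F i l = 0) (i j l : ℕ) :
    l < entryOf F c i j ↔ j < F i l := by
  have hanti : Antitone (F i) := antitone_nat_of_succ_le (hmono i)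
  set T := (Finset.range c).filter fun l => j < F i l with hT
  have hmem : l ∈ (T : Set ℕ) ↔ l < (T : Set ℕ).ncard := by
    apply mem_iff_lt_ncard T.finite_toSet
    intro x hx y hy
    simp only [hT, Finset.coe_filter, Set.mem_setOf_eq, Finset.mem_range] at hx ⊢
    exact ⟨lt_of_le_of_lt hy hx.1, lt_of_lt_of_le hx.2 (hanti hy)⟩
  rw [Set.ncard_coe_finset] at hmem
  have : l ∈ (T : Set ℕ) ↔ j < F i l := by
    simp only [hT, Finset.coe_filter, Set.mem_setOf_eq, Finset.mem_range]
    constructor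
    · exact fun h => h.2
    · intro h
      refine ⟨?_, h⟩
      by_contra hc
      push_neg at hc
      rw [hZ i l hc] at h
      omega
  rw [← this, hmem]
  rfl

noncomputable def piOf (b c : ℕ) (d : ℕ → ℕ → ℕ) : PlanePartition where
  entry := entryOf (buildF b c d) c
  row_decr := by
    intro i j
    apply Finset.card_le_card
    intro l hl
    simp only [Finset.mem_filter, Finset.mem_range] at hl ⊢
    exact ⟨hl.1, by omega⟩
  col_decr := by
    intro i j
    apply Finset.card_le_card
    intro l hl
    simp only [Finset.mem_filter, Finset.mem_range] at hl ⊢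
    exact ⟨hl.1, lt_of_lt_of_le hl.2 (buildF_row_le b c d i l)⟩
  finite_support := by
    apply Set.Finite.subset ((Set.finite_Iio b).prod (Set.finite_Iio (buildF b c d 0 0)))
    rintro ⟨i, j⟩ hij
    simp only [Set.mem_setOf_eq] at hij
    have hne : ((Finset.range c).filter fun l => j < buildF b c d i l).Nonempty :=
      Finset.card_pos.mp (Nat.pos_of_ne_zero hij)
    obtain ⟨l, hl⟩ := hne
    simp only [Finset.mem_filter, Finset.mem_range] at hl
    have hanti : Antitone (buildF b c d i) :=
      antitone_nat_of_succ_le (buildF_succ_le b c d i)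
    have h1 : buildF b c d i l ≤ buildF b c d i 0 := hanti (Nat.zero_le l)
    have h2 : buildF b c d i 0 ≤ buildF b c d 0 0 := by
      clear hl h1 hij hanti
      induction i with
      | zero => exact le_rfl
      | succ n ihn => exact le_trans (buildF_row_le b c d n 0) ihn
    constructor
    · simp only [Set.mem_Iio]
      by_contra hib
      push_neg at hib
      rw [buildF_zero b c d i l (Or.inl hib)] at hl
      omega
    · simp only [Set.mem_Iio]
      omega

end PPaux
namespace PPaux

lemma pp_ext {π π' : PlanePartition} (h : π.entry = π'.entry) : π = π' := by
  cases π; cases π'; simp_all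

lemma buildF_le00 (b c : ℕ) (d : ℕ → ℕ → ℕ) (i l : ℕ) :
    buildF b c d i l ≤ buildF b c d 0 0 := by
  have hl : Antitone (buildF b c d i) := antitone_nat_of_succ_le (buildF_succ_le b c d i)
  have hi : Antitone (fun i => buildF b c d i 0) :=
    antitone_nat_of_succ_le (fun n => buildF_row_le b c d n 0)
  exact le_trans (hl (Nat.zero_le l)) (hi (Nat.zero_le i))

lemma Fpi_piOf (b c : ℕ) (d : ℕ → ℕ → ℕ) (i l : ℕ) :
    Fpi (piOf b c d) i l = buildF b c d i l := by
  have hconj := lt_entryOf_iff (F := buildF b c d) (c := c) (buildF_succ_le b c d)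
    (fun i l h => buildF_zero b c d i l (Or.inr h))
  have hset : {j | l < (piOf b c d).entry i j} = Set.Iio (buildF b c d i l) := by
    ext j
    simp only [Set.mem_setOf_eq, Set.mem_Iio]
    exact hconj i j l
  rw [Fpi, hset, ncard_Iio]

end PPaux

/-- For all positive integers `a, b, c`, the map `Φ` restricts to a bijection
from `PP(a,b,c)` onto `BM(a,b,c)`; in particular `|PP(a,b,c)| = |BM(a,b,c)|`. -/
theorem phi_bijOn_PP_BM (a b c : ℕ) (ha : 0 < a) (hb : 0 < b) (hc : 0 < c) :
    Set.BijOn (fun π : PlanePartition => π.phiMatrix) (PP a b c) (BM a b c) ∧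
    (PP a b c).ncard = (BM a b c).ncard := by
  have hbij : Set.BijOn (fun π : PlanePartition => π.phiMatrix) (PP a b c) (BM a b c) := by
    refine ⟨?_, ?_, ?_⟩
    · -- MapsTo
      intro π hπ
      obtain ⟨hcols, hrows, hent⟩ := hπ
      refine ⟨?_, ?_, ?_⟩
      · intro i j hbi
        show π.phiMatrix i j = 0
        have hempty : {j' | π.entry i j' = j + 1 ∧ π.entry (i + 1) j' < j + 1} = ∅ := by
          rw [Set.eq_empty_iff_forall_notMem]
          rintro j' ⟨h1, _⟩
          rw [hrows i j' hbi] at h1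
          omega
        rw [PlanePartition.phiMatrix, PlanePartition.phi, hempty, Set.ncard_empty]
      · intro i l hcl
        show π.phiMatrix i l = 0
        have hempty : {j' | π.entry i j' = l + 1 ∧ π.entry (i + 1) j' < l + 1} = ∅ := by
          rw [Set.eq_empty_iff_forall_notMem]
          rintro j' ⟨h1, _⟩
          have := hent i j'
          omega
        rw [PlanePartition.phiMatrix, PlanePartition.phi, hempty, Set.ncard_empty]
      · rw [PPaux.lastPassage_eq hb hc (fun i l => PPaux.Fpi_rec π i l)
          (fun i l h => PPaux.Fpi_zero hrows hent i l h)]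
        have hsub : {j | 0 < π.entry 0 j} ⊆ Set.Iio a := by
          intro j hj
          simp only [Set.mem_setOf_eq] at hj
          simp only [Set.mem_Iio]
          by_contra hcon
          push_neg at hcon
          rw [hcols 0 j hcon] at hj
          omega
        calc PPaux.Fpi π 0 0 ≤ (Set.Iio a).ncard :=
              Set.ncard_le_ncard hsub (Set.finite_Iio a)
          _ = a := PPaux.ncard_Iio a
    · -- InjOn
      intro π hπ π' hπ' heq
      obtain ⟨hcols, hrows, hent⟩ := hπ
      obtain ⟨hcols', hrows', hent'⟩ := hπ'
      have heq' : π.phiMatrix = π'.phiMatrix := heq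
      have hF := PPaux.F_unique (b := b) (c := c) (d := π.phiMatrix)
        (fun i l => PPaux.Fpi_rec π i l)
        (fun i l => by rw [heq']; exact PPaux.Fpi_rec π' i l)
        (fun i l h => PPaux.Fpi_zero hrows hent i l h)
        (fun i l h => PPaux.Fpi_zero hrows' hent' i l h)
      apply PPaux.pp_ext
      funext i j
      have key : ∀ l, l < π.entry i j ↔ l < π'.entry i j := by
        intro l
        rw [← PPaux.lt_Fpi_iff π i l j, ← PPaux.lt_Fpi_iff π' i l j, hF i l]
      have h1 := key (π.entry i j)
      have h2 := key (π'.entry i j)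
      omega
    · -- SurjOn
      intro dmat hd
      obtain ⟨hd1, hd2, hd3⟩ := hd
      have hdv : ∀ i l, b ≤ i ∨ c ≤ l → dmat i l = 0 := fun i l h => h.elim (hd1 i l) (hd2 i l)
      have hR := PPaux.buildF_rec b c dmat hdv
      have hZ : ∀ i l, b ≤ i ∨ c ≤ l → PPaux.buildF b c dmat i l = 0 :=
        fun i l h => PPaux.buildF_zero b c dmat i l h
      have hF00 : PPaux.buildF b c dmat 0 0 ≤ a := by
        have := PPaux.lastPassage_eq hb hc hR hZ
        omega
      refine ⟨PPaux.piOf b c dmat, ⟨?_, ?_, ?_⟩, ?_⟩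
      · -- colsLE a
        intro i j haj
        show PPaux.entryOf (PPaux.buildF b c dmat) c i j = 0
        by_contra hne
        obtain ⟨l, hl⟩ := Finset.card_pos.mp (Nat.pos_of_ne_zero hne)
        simp only [Finset.mem_filter, Finset.mem_range] at hl
        have := PPaux.buildF_le00 b c dmat i l
        omega
      · -- rowsLE b
        intro i j hbi
        show PPaux.entryOf (PPaux.buildF b c dmat) c i j = 0
        rw [PPaux.entryOf, Finset.card_eq_zero, Finset.filter_eq_empty_iff]
        intro l _
        rw [hZ i l (Or.inl hbi)]
        omega
      · -- entriesLE c
        intro i j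
        show PPaux.entryOf (PPaux.buildF b c dmat) c i j ≤ c
        calc ((Finset.range c).filter fun l => j < PPaux.buildF b c dmat i l).card
            ≤ (Finset.range c).card := Finset.card_filter_le _ _
          _ = c := Finset.card_range c
      · -- phiMatrix (piOf ...) = dmat
        show (PPaux.piOf b c dmat).phiMatrix = dmat
        funext i l
        have h1 := PPaux.Fpi_rec (PPaux.piOf b c dmat) i l
        rw [PPaux.Fpi_piOf b c dmat i l, PPaux.Fpi_piOf b c dmat i (l + 1),
          PPaux.Fpi_piOf b c dmat (i + 1) l] at h1
        have h2 := hR i l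
        omega
  refine ⟨hbij, ?_⟩
  calc (PP a b c).ncard
      = ((fun π : PlanePartition => π.phiMatrix) '' PP a b c).ncard :=
        (Set.ncard_image_of_injOn hbij.injOn).symm
    _ = (BM a b c).ncard := by rw [hbij.image_eq]
end

section
/- For every plane partition π with Φ(π) = (d_{iℓ}) and every ℓ ≥ 1, the number c_ℓ(π) of columns of π containing the entry ℓ equals the ℓ-th column sum ∑_i d_{iℓ} of Φ(π). -/
open scoped BigOperators

/-!
In every column `j` that contains `ℓ ≥ 1` there is exactly one row `i` with
`π i j = ℓ > π (i+1) j`, namely the last occurrence of `ℓ` in that column (which exists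
because the column eventually vanishes). So `Prod.snd` is a bijection from the cells counted
by `Φ(π)` in its `ℓ`-th column onto the columns containing `ℓ`, and summing those cells row
by row gives `∑ᵢ d_{iℓ}`.
-/

theorem Set.Finite.finsum_ncard_preimage_prodMk {α β : Type*} {s : Set (α × β)}
    (hs : s.Finite) : ∑ᶠ a, (Prod.mk a ⁻¹' s).ncard = s.ncard := by
  have hsupp : (Function.support fun p => ∑ᶠ _ : p ∈ s, 1).Finite :=
    hs.subset fun p hp => by by_contra h; simp [h] at hp
  rw [← finsum_one, finsum_curry _ hsupp]
  simp only [← finsum_one]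
  rfl

namespace PlanePartition

variable (π : PlanePartition)

theorem entry_le_entry_of_le {i k : ℕ} (j : ℕ) (h : i ≤ k) : π.entry k j ≤ π.entry i j :=
  antitone_nat_of_succ_le (f := fun i => π.entry i j) (fun i => π.col_decr i j) h

theorem exists_entry_eq_zero (j : ℕ) : ∃ i, π.entry i j = 0 := by
  obtain ⟨i, hi⟩ := (π.finite_support.preimage (Prod.mk_left_injective j).injOn).exists_notMem
  exact ⟨i, by simpa using hi⟩

/-- The cells counted by the column `ℓ` of `Φ(π)`. -/
def descentCells (ℓ : ℕ) : Set (ℕ × ℕ) :=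
  {p | π.entry p.1 p.2 = ℓ ∧ π.entry (p.1 + 1) p.2 < ℓ}

theorem descentCells_finite (ℓ : ℕ) : (π.descentCells ℓ).Finite :=
  π.finite_support.subset fun p (hp : _ ∧ _) => show π.entry p.1 p.2 ≠ 0 by omega

theorem phi_eq_ncard_preimage_descentCells (i ℓ : ℕ) :
    π.phi i ℓ = (Prod.mk i ⁻¹' π.descentCells ℓ).ncard :=
  rfl

theorem injOn_snd_descentCells (ℓ : ℕ) : Set.InjOn Prod.snd (π.descentCells ℓ) := by
  rintro ⟨i, j⟩ ⟨hi, hi'⟩ ⟨k, _⟩ ⟨hk, hk'⟩ (rfl : j = _)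
  simp only at hi hi' hk hk'
  have hik : ¬ i < k := fun h => by have := π.entry_le_entry_of_le (i := i + 1) j h; omega
  have hki : ¬ k < i := fun h => by have := π.entry_le_entry_of_le (i := k + 1) j h; omega
  rw [show i = k by omega]

theorem snd_image_descentCells {ℓ : ℕ} (hℓ : 1 ≤ ℓ) :
    Prod.snd '' π.descentCells ℓ = {j | ∃ i, π.entry i j = ℓ} := by
  ext j
  refine ⟨fun ⟨p, hp, hpj⟩ => ⟨p.1, hpj ▸ hp.1⟩, fun ⟨i, hi⟩ => ?_⟩
  -- `n` is the first row below which column `j` drops under `ℓ`; the row above it is the last `ℓ`.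
  have hdrop : ∃ n, π.entry n j < ℓ := by
    obtain ⟨n, hn⟩ := π.exists_entry_eq_zero j
    exact ⟨n, by omega⟩
  have hin : i < Nat.find hdrop := by
    by_contra h
    have := π.entry_le_entry_of_le j (not_lt.mp h)
    have := Nat.find_spec hdrop
    omega
  obtain ⟨m, hm⟩ : ∃ m, Nat.find hdrop = m + 1 := Nat.exists_eq_add_one.mpr (by omega)
  have hbelow : π.entry (m + 1) j < ℓ := hm ▸ Nat.find_spec hdrop
  have habove : ℓ ≤ π.entry m j := not_lt.mp (Nat.find_min hdrop (by omega))
  have := π.entry_le_entry_of_le j (show i ≤ m by omega)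
  exact ⟨(m, j), ⟨by simp only; omega, hbelow⟩, rfl⟩

end PlanePartition

/-- for every plane partition `π` with `Φ(π) = (d_{iℓ})` and every `ℓ ≥ 1`,
the number of columns of `π` containing the entry `ℓ` equals the `ℓ`-th column sum of `Φ(π)`. -/
theorem cCol_eq_colsum_phi (π : PlanePartition) (ℓ : ℕ) (hℓ : 1 ≤ ℓ) :
    π.cCol ℓ = ∑ᶠ i, π.phi i ℓ := by
  calc π.cCol ℓ = (Prod.snd '' π.descentCells ℓ).ncard := by
        rw [PlanePartition.cCol, π.snd_image_descentCells hℓ]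
    _ = (π.descentCells ℓ).ncard := (π.injOn_snd_descentCells ℓ).ncard_image
    _ = ∑ᶠ i, π.phi i ℓ := by
        simp only [π.phi_eq_ncard_preimage_descentCells]
        exact ((π.descentCells_finite ℓ).finsum_ncard_preimage_prodMk).symm
end

section
/- Let π be a plane partition with at most b rows and entries at most c, let λ = sh(π) with parts λ_1 ≥ λ_2 ≥ ⋯ (λ_k = 0 if the k-th row is empty), and let D = Φ(π) = (d_{iℓ}) viewed as a b×c matrix. Then for every k ∈ [1,b], λ_k = max over monotone paths Π from (k,1) to (b,c) of ∑_{(i,ℓ)∈Π} d_{iℓ}. -/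
open scoped BigOperators

/-!
Let `F(i, ℓ)` be the number of entries of row `i` exceeding `ℓ`. Row `i` exceeds `ℓ` exactly on
the columns `j < F(i, ℓ)`, so `d_{i,ℓ+1}` counts the columns in
`[max (F(i+1, ℓ), F(i, ℓ+1)), F(i, ℓ))`, i.e. `F(i, ℓ) = d_{i,ℓ+1} + max (F(i+1, ℓ), F(i, ℓ+1))`.
This is the recursion of last passage percolation, and `F` vanishes past the last row and past
the largest entry, so `F(i, ℓ)` is the last passage time from `(i, ℓ)`; and `F(i, 0) = λ_{i+1}`.
-/

section LastPassage

variable {d G : ℕ → ℕ → ℕ}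

theorem IsMonPath.singleton (p : ℕ × ℕ) : IsMonPath [p] p p :=
  ⟨rfl, rfl, List.isChain_singleton p⟩

theorem IsMonPath.cons {L : List (ℕ × ℕ)} {p q t : ℕ × ℕ} (hL : IsMonPath L q t)
    (hpq : q = (p.1 + 1, p.2) ∨ q = (p.1, p.2 + 1)) : IsMonPath (p :: L) p t := by
  obtain ⟨hhead, hlast, hchain⟩ := hL
  obtain ⟨L, rfl⟩ := List.head?_eq_some_iff.mp hhead
  exact ⟨rfl, by rwa [List.getLast?_cons_cons], List.isChain_cons_cons.mpr ⟨hpq, hchain⟩⟩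

theorem sum_map_le_of_isChain
    (hG : ∀ i l, d i l + max (G (i + 1) l) (G i (l + 1)) ≤ G i l) (p : ℕ × ℕ)
    (L : List (ℕ × ℕ))
    (hL : (p :: L).IsChain fun p q => q = (p.1 + 1, p.2) ∨ q = (p.1, p.2 + 1)) :
    ((p :: L).map fun q => d q.1 q.2).sum ≤ G p.1 p.2 := by
  induction L generalizing p with
  | nil => simpa using (le_add_right le_rfl).trans (hG p.1 p.2)
  | cons q L ih =>
    obtain ⟨hpq, hL⟩ := List.isChain_cons_cons.mp hL
    have hq : G q.1 q.2 ≤ max (G (p.1 + 1) p.2) (G p.1 (p.2 + 1)) := by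
      rcases hpq with rfl | rfl
      · exact le_max_left _ _
      · exact le_max_right _ _
    calc ((p :: q :: L).map fun q => d q.1 q.2).sum
        = d p.1 p.2 + ((q :: L).map fun q => d q.1 q.2).sum := List.sum_cons
      _ ≤ d p.1 p.2 + max (G (p.1 + 1) p.2) (G p.1 (p.2 + 1)) := by
        gcongr
        exact (ih q hL).trans hq
      _ ≤ G p.1 p.2 := hG p.1 p.2

variable {m n : ℕ}

theorem exists_isMonPath_sum_map_eq
    (hG : ∀ i l, G i l = d i l + max (G (i + 1) l) (G i (l + 1)))
    (hrow : ∀ l, G (m + 1) l = 0) (hcol : ∀ i, G i (n + 1) = 0)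
    (i l : ℕ) (hi : i ≤ m) (hl : l ≤ n) :
    ∃ L, IsMonPath L (i, l) (m, n) ∧ (L.map fun p => d p.1 p.2).sum = G i l := by
  have hrec := hG i l
  by_cases hdown : i < m ∧ (l = n ∨ G i (l + 1) ≤ G (i + 1) l)
  · obtain ⟨L, hL, hsum⟩ := exists_isMonPath_sum_map_eq hG hrow hcol (i + 1) l hdown.1 hl
    have hmax : G i (l + 1) ≤ G (i + 1) l := by
      rcases hdown.2 with rfl | h
      · simp [hcol]
      · exact h
    refine ⟨(i, l) :: L, hL.cons (Or.inl rfl), ?_⟩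
    simp only [List.map_cons, List.sum_cons, hsum]
    omega
  · by_cases hright : l < n
    · obtain ⟨L, hL, hsum⟩ := exists_isMonPath_sum_map_eq hG hrow hcol i (l + 1) hi hright
      have hmax : G (i + 1) l ≤ G i (l + 1) := by
        rcases hi.lt_or_eq with h | rfl
        · exact le_of_lt (not_le.mp fun h' => hdown ⟨h, Or.inr h'⟩)
        · simp [hrow]
      refine ⟨(i, l) :: L, hL.cons (Or.inr rfl), ?_⟩
      simp only [List.map_cons, List.sum_cons, hsum]
      omega
    · obtain rfl : l = n := by omega
      obtain rfl : i = m := by by_contra h; exact hdown ⟨by omega, Or.inl rfl⟩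
      refine ⟨[(i, l)], IsMonPath.singleton _, ?_⟩
      simp [hrec, hrow, hcol]
termination_by (m - i) + (n - l)

theorem lastPassage_eq_of_recursion
    (hG : ∀ i l, G i l = d i l + max (G (i + 1) l) (G i (l + 1)))
    (hrow : ∀ l, G (m + 1) l = 0) (hcol : ∀ i, G i (n + 1) = 0)
    {i l : ℕ} (hi : i ≤ m) (hl : l ≤ n) :
    lastPassage d (i, l) (m, n) = G i l := by
  refine IsGreatest.csSup_eq ⟨?_, ?_⟩
  · obtain ⟨L, hL, hsum⟩ := exists_isMonPath_sum_map_eq hG hrow hcol i l hi hl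
    exact ⟨L, hL, hsum.symm⟩
  · rintro _ ⟨L, ⟨hhead, -, hchain⟩, rfl⟩
    obtain ⟨L, rfl⟩ := List.head?_eq_some_iff.mp hhead
    exact sum_map_le_of_isChain (fun i l => (hG i l).ge) _ L hchain

end LastPassage

namespace PlanePartition

variable (π : PlanePartition)

/-- The number of entries of row `i` exceeding `ℓ`, encoded as the first column where row `i`
drops to at most `ℓ`. -/
noncomputable def numExceeding (i l : ℕ) : ℕ := sInf {j | π.entry i j ≤ l}

theorem antitone_entry (i : ℕ) : Antitone (π.entry i) :=
  antitone_nat_of_succ_le (π.row_decr i)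

theorem exists_entry_le (i l : ℕ) : ∃ j, π.entry i j ≤ l := by
  have hfin : {j | π.entry i j ≠ 0}.Finite :=
    (π.finite_support.image Prod.snd).subset fun j hj => ⟨(i, j), hj, rfl⟩
  obtain ⟨j, hj⟩ := hfin.infinite_compl.nonempty
  exact ⟨j, by simp_all⟩

theorem lt_numExceeding_iff {i l j : ℕ} : j < π.numExceeding i l ↔ l < π.entry i j := by
  refine ⟨fun h => not_le.mp (Nat.notMem_of_lt_sInf (s := {j | π.entry i j ≤ l}) h),
    fun h => ?_⟩
  by_contra! hj
  have hdrop : π.entry i (π.numExceeding i l) ≤ l := Nat.sInf_mem (π.exists_entry_le i l)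
  exact (h.trans_le (π.antitone_entry i hj)).not_ge hdrop

theorem numExceeding_succ_row_le (i l : ℕ) : π.numExceeding (i + 1) l ≤ π.numExceeding i l :=
  le_of_forall_lt fun j hj => π.lt_numExceeding_iff.mpr
    ((π.lt_numExceeding_iff.mp hj).trans_le (π.col_decr i j))

theorem numExceeding_succ_le (i l : ℕ) : π.numExceeding i (l + 1) ≤ π.numExceeding i l :=
  le_of_forall_lt fun _ hj => π.lt_numExceeding_iff.mpr
    ((Nat.lt_succ_self l).trans (π.lt_numExceeding_iff.mp hj))

theorem numExceeding_eq_zero_of_rowsLE {b : ℕ} (hrows : π.rowsLE b) {i : ℕ} (hi : b ≤ i)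
    (l : ℕ) : π.numExceeding i l = 0 := by
  by_contra! h
  simpa [hrows i 0 hi] using π.lt_numExceeding_iff.mp (Nat.pos_of_ne_zero h)

theorem numExceeding_eq_zero_of_entriesLE {c : ℕ} (hent : π.entriesLE c) {l : ℕ} (hl : c ≤ l)
    (i : ℕ) : π.numExceeding i l = 0 := by
  by_contra! h
  exact (π.lt_numExceeding_iff.mp (Nat.pos_of_ne_zero h)).not_ge ((hent i 0).trans hl)

theorem ncard_setOf_lt_entry (i l : ℕ) : {j | l < π.entry i j}.ncard = π.numExceeding i l := by
  have hIio : {j | l < π.entry i j} = Set.Iio (π.numExceeding i l) := by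
    ext j
    exact π.lt_numExceeding_iff.symm
  rw [hIio, ← Finset.coe_Iio, Set.ncard_coe_finset, Nat.card_Iio]

theorem rowLen_eq_numExceeding_zero (i : ℕ) : π.rowLen i = π.numExceeding i 0 :=
  π.ncard_setOf_lt_entry i 0

theorem phiMatrix_eq_numExceeding_sub (i l : ℕ) : π.phiMatrix i l =
    π.numExceeding i l - max (π.numExceeding (i + 1) l) (π.numExceeding i (l + 1)) := by
  have hIco : {j | π.entry i j = l + 1 ∧ π.entry (i + 1) j < l + 1} =
      Set.Ico (max (π.numExceeding (i + 1) l) (π.numExceeding i (l + 1)))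
        (π.numExceeding i l) := by
    ext j
    have := π.lt_numExceeding_iff (i := i) (l := l) (j := j)
    have := π.lt_numExceeding_iff (i := i) (l := l + 1) (j := j)
    have := π.lt_numExceeding_iff (i := i + 1) (l := l) (j := j)
    simp only [Set.mem_ofPred_eq, Set.mem_Ico]
    omega
  rw [phiMatrix, phi, hIco, ← Finset.coe_Ico, Set.ncard_coe_finset, Nat.card_Ico]

theorem numExceeding_eq_phiMatrix_add_max (i l : ℕ) : π.numExceeding i l =
    π.phiMatrix i l + max (π.numExceeding (i + 1) l) (π.numExceeding i (l + 1)) := by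
  have := π.numExceeding_succ_row_le i l
  have := π.numExceeding_succ_le i l
  rw [phiMatrix_eq_numExceeding_sub]
  omega

end PlanePartition

theorem shape_part_eq_lastPassage_general (b c : ℕ)
    (π : PlanePartition) (hrows : π.rowsLE b) (hent : π.entriesLE c)
    (k : ℕ) (hkb : k ≤ b) :
    π.rowLen (k - 1) = lastPassage π.phiMatrix (k - 1, 0) (b - 1, c - 1) := by
  rw [π.rowLen_eq_numExceeding_zero]
  refine (lastPassage_eq_of_recursion π.numExceeding_eq_phiMatrix_add_max
    (fun l => π.numExceeding_eq_zero_of_rowsLE hrows (by omega) l)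
    (fun i => π.numExceeding_eq_zero_of_entriesLE hent (by omega) i)
    (by omega) (Nat.zero_le _)).symm

/-- for a plane partition `π` with at most `b` rows and entries at most `c`,
the `k`-th part of the shape of `π` equals the last passage time of `Φ(π)` from `(k,1)`
to `(b,c)` (stated here with 0-indexed rows/columns of the matrix `Φ(π)`). -/
theorem shape_part_eq_lastPassage (b c : ℕ) (hb : 0 < b) (hc : 0 < c)
    (π : PlanePartition) (hrows : π.rowsLE b) (hent : π.entriesLE c)
    (k : ℕ) (hk1 : 1 ≤ k) (hkb : k ≤ b) :
    π.rowLen (k - 1) = lastPassage π.phiMatrix (k - 1, 0) (b - 1, c - 1) :=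
  shape_part_eq_lastPassage_general b c π hrows hent k hkb
end

section
/- For every partition λ with at most b parts and all real numbers q_1,…,q_c: ∑_{π} ∏_{(i,j) ∈ Des(π)} q_{π_{ij}} = g_λ(q_1,…,q_c), where the (finite) sum is over all plane partitions π of shape λ with entries at most c. Consequently, the g-measure of the set {π ∈ PP(∞,b,c) : sh(π) = λ} equals Z_{b,c}^{−1} g_λ(q_1,…,q_c). -/
open scoped BigOperators

/-!
In a column of a plane partition the cell `(i, j)` is a descent exactly when it is the lowest
occurrence of its value in that column. So the descents with value `ℓ` are in bijection with the
columns containing `ℓ`, and the descent weight of `π` is the monomial `∏ q_ℓ ^ c_ℓ(π)` of `g_λ`.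
The shape already bounds the number of rows, so the `g`-measure statement is the same sum.
-/

namespace PlanePartition

variable (π : PlanePartition)

lemma entry_antitone_left (j : ℕ) : Antitone (π.entry · j) :=
  antitone_nat_of_succ_le (π.col_decr · j)

lemma des_finite : π.des.Finite :=
  π.finite_support.subset fun p (hp : π.entry (p.1 + 1) p.2 < π.entry p.1 p.2) => by
    simp only [Set.mem_ofPred_eq]
    omega

lemma exists_entry_eq_zero_of_le (i j : ℕ) : ∃ i', i ≤ i' ∧ π.entry i' j = 0 := by
  obtain ⟨B, hB⟩ := π.finite_support.bddAbove
  refine ⟨i + B.1 + 1, by omega, ?_⟩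
  by_contra h
  have := (hB (show (i + B.1 + 1, j) ∈ {p : ℕ × ℕ | π.entry p.1 p.2 ≠ 0} from h)).1
  simp only at this
  omega

lemma eq_of_mem_des_of_entry_eq {i i' j : ℕ} (hi : (i, j) ∈ π.des) (hi' : (i', j) ∈ π.des)
    (h : π.entry i j = π.entry i' j) : i = i' := by
  simp only [des, Set.mem_ofPred_eq] at hi hi'
  by_contra hne
  rcases Nat.lt_or_gt_of_ne hne with hlt | hlt
  · have : π.entry i' j ≤ π.entry (i + 1) j := π.entry_antitone_left j hlt
    omega
  · have : π.entry i j ≤ π.entry (i' + 1) j := π.entry_antitone_left j hlt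
    omega

lemma exists_mem_des_entry_eq {i j m : ℕ} (hm : 0 < m) (h : π.entry i j = m) :
    ∃ i', (i', j) ∈ π.des ∧ π.entry i' j = m := by
  have hex : ∃ k, π.entry (i + k + 1) j < m := by
    obtain ⟨i', hii', h0⟩ := π.exists_entry_eq_zero_of_le (i + 1) j
    exact ⟨i' - i - 1, by rw [show i + (i' - i - 1) + 1 = i' by omega]; omega⟩
  set k := Nat.find hex
  have hbelow : π.entry (i + k + 1) j < m := Nat.find_spec hex
  have hle : π.entry (i + k) j ≤ m := h ▸ π.entry_antitone_left j (Nat.le_add_right i k)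
  have hge : m ≤ π.entry (i + k) j := by
    rcases Nat.eq_zero_or_pos k with hk | hk
    · rw [hk, Nat.add_zero, h]
    · have := Nat.find_min hex (Nat.sub_one_lt_of_lt hk)
      rw [show i + (k - 1) + 1 = i + k by omega] at this
      omega
  exact ⟨i + k, by simp only [des, Set.mem_ofPred_eq]; omega, by omega⟩

lemma ncard_des_entry_eq {m : ℕ} (hm : 0 < m) :
    {p | p ∈ π.des ∧ π.entry p.1 p.2 = m}.ncard = π.cCol m := by
  have hinj : Set.InjOn Prod.snd {p | p ∈ π.des ∧ π.entry p.1 p.2 = m} := by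
    rintro ⟨i, j⟩ ⟨hi, hei⟩ ⟨i', j'⟩ ⟨hi', hei'⟩ (rfl : j = j')
    rw [π.eq_of_mem_des_of_entry_eq hi hi' (hei.trans hei'.symm)]
  have himage :
      Prod.snd '' {p | p ∈ π.des ∧ π.entry p.1 p.2 = m} = {j | ∃ i, π.entry i j = m} := by
    ext j
    constructor
    · rintro ⟨⟨i, j⟩, ⟨-, he⟩, rfl⟩
      exact ⟨i, he⟩
    · rintro ⟨i, he⟩
      obtain ⟨i', hdes, he'⟩ := π.exists_mem_des_entry_eq hm he
      exact ⟨(i', j), ⟨hdes, he'⟩, rfl⟩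
  rw [cCol, ← himage, hinj.ncard_image]

lemma desWeight_eq_prod_pow_cCol {c : ℕ} (hc : π.entriesLE c) (q : ℕ → ℝ) :
    desWeight π q = ∏ ℓ ∈ Finset.range c, q ℓ ^ π.cCol (ℓ + 1) := by
  classical
  rw [desWeight, ← π.des_finite.coe_toFinset, finprod_mem_coe_finset]
  have hmaps : ∀ p ∈ π.des_finite.toFinset, π.entry p.1 p.2 - 1 ∈ Finset.range c := by
    intro p hp
    have := hc p.1 p.2
    simp only [Set.Finite.mem_toFinset, des, Set.mem_ofPred_eq] at hp
    simp only [Finset.mem_range]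
    omega
  rw [← Finset.prod_fiberwise_of_maps_to hmaps]
  refine Finset.prod_congr rfl fun ℓ _ => ?_
  rw [Finset.prod_congr rfl fun p hp => by rw [(Finset.mem_filter.mp hp).2],
    Finset.prod_const, ← π.ncard_des_entry_eq ℓ.succ_pos, ← Set.ncard_coe_finset]
  congr 2
  ext p
  simp only [Finset.coe_filter, Set.Finite.mem_toFinset, des, Set.mem_ofPred_eq]
  omega

lemma rowsLE_of_hasShape {μ : YoungDiagram} {b : ℕ} (hsh : π.hasShape μ)
    (hμ : μ.colLen 0 ≤ b) : π.rowsLE b := by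
  intro i j hbi
  by_contra h
  have hmem : (i, 0) ∈ μ :=
    μ.up_left_mem le_rfl (Nat.zero_le j) ((hsh i j).mp (Nat.pos_of_ne_zero h))
  have := YoungDiagram.mem_iff_lt_colLen.mp hmem
  omega

end PlanePartition

theorem gMeasure_shape_general (b c : ℕ) (μ : YoungDiagram)
    (hμ : μ.colLen 0 ≤ b) (q : ℕ → ℝ) :
    (∑ᶠ π ∈ {π : PlanePartition | π.hasShape μ ∧ π.entriesLE c}, desWeight π q
        = grothG μ c q) ∧
    (∏ i ∈ Finset.range c, (1 - q i)⁻¹ ^ b)⁻¹ *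
        ∑ᶠ π ∈ {π ∈ PPinf b c | π.hasShape μ}, desWeight π q
      = (∏ i ∈ Finset.range c, (1 - q i)⁻¹ ^ b)⁻¹ * grothG μ c q := by
  have hsum : ∑ᶠ π ∈ {π : PlanePartition | π.hasShape μ ∧ π.entriesLE c}, desWeight π q
      = grothG μ c q :=
    finsum_mem_congr rfl fun π hπ => π.desWeight_eq_prod_pow_cCol hπ.2 q
  have hset : {π ∈ PPinf b c | π.hasShape μ}
      = {π : PlanePartition | π.hasShape μ ∧ π.entriesLE c} :=
    Set.ext fun π => ⟨fun ⟨⟨_, hc⟩, hsh⟩ => ⟨hsh, hc⟩,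
      fun ⟨hsh, hc⟩ => ⟨⟨π.rowsLE_of_hasShape hsh hμ, hc⟩, hsh⟩⟩
  exact ⟨hsum, by rw [hset, hsum]⟩

/-- for every partition `λ` with at most `b` parts and all real `q_1,…,q_c`,
`∑_π ∏_{(i,j) ∈ Des(π)} q_{π_{ij}} = g_λ(q_1,…,q_c)`, the sum over plane partitions of
shape `λ` with entries at most `c`; consequently the `g`-measure of
`{π ∈ PP(∞,b,c) : sh(π) = λ}` equals `Z_{b,c}⁻¹ g_λ(q_1,…,q_c)`. -/
theorem gMeasure_shape (b c : ℕ) (hb : 0 < b) (hc : 0 < c) (μ : YoungDiagram)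
    (hμ : μ.colLen 0 ≤ b) (q : ℕ → ℝ) :
    (∑ᶠ π ∈ {π : PlanePartition | π.hasShape μ ∧ π.entriesLE c}, desWeight π q
        = grothG μ c q) ∧
    (∏ i ∈ Finset.range c, (1 - q i)⁻¹ ^ b)⁻¹ *
        ∑ᶠ π ∈ {π ∈ PPinf b c | π.hasShape μ}, desWeight π q
      = (∏ i ∈ Finset.range c, (1 - q i)⁻¹ ^ b)⁻¹ * grothG μ c q :=
  gMeasure_shape_general b c μ hμ q
end

section
/- Normalization of the g-measure: for q_1,…,q_c ∈ [0,1), the family (∏_{(i,j)∈Des(π)} q_{π_{ij}}) indexed by π ∈ PP(∞,b,c) is summable and ∑_{π ∈ PP(∞,b,c)} ∏_{(i,j)∈Des(π)} q_{π_{ij}} = ∏_{i=1}^{c} (1 − q_i)^{−b}; hence the g-measure is a probability measure. -/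
open scoped BigOperators

/-- finite lower subsets of ℕ are initial segments -/
lemma mem_lower_iff {S : Set ℕ} (hfin : S.Finite)
    (hlow : ∀ ⦃m n : ℕ⦄, m ≤ n → n ∈ S → m ∈ S) (j : ℕ) :
    j ∈ S ↔ j < S.ncard := by
  constructor
  · intro hj
    have hsub : Set.Iic j ⊆ S := fun m hm => hlow hm hj
    have h := Set.ncard_le_ncard hsub hfin
    rw [← Finset.coe_Iic, Set.ncard_coe_finset, Nat.card_Iic] at h
    omega
  · intro h
    by_contra hj
    have hsub : S ⊆ Set.Iio j := fun s hs => by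
      by_contra hlt
      exact hj (hlow (le_of_not_gt hlt) hs)
    have h2 := Set.ncard_le_ncard hsub (Set.finite_Iio j)
    rw [← Finset.coe_Iio, Set.ncard_coe_finset, Nat.card_Iio] at h2
    omega

def Amat (b c : ℕ) (d : ℕ → ℕ → ℕ) (i ℓ : ℕ) : ℕ :=
  if i < b ∧ ℓ < c then d i ℓ + max (Amat b c d i (ℓ+1)) (Amat b c d (i+1) ℓ) else 0
termination_by (b - i) + (c - ℓ)
decreasing_by all_goals omega

lemma Amat_def (b c : ℕ) (d : ℕ → ℕ → ℕ) (i ℓ : ℕ) :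
    Amat b c d i ℓ =
      if i < b ∧ ℓ < c then d i ℓ + max (Amat b c d i (ℓ+1)) (Amat b c d (i+1) ℓ) else 0 := by
  rw [Amat]

lemma Amat_zero {b c : ℕ} {d : ℕ → ℕ → ℕ} {i ℓ : ℕ} (h : b ≤ i ∨ c ≤ ℓ) :
    Amat b c d i ℓ = 0 := by
  rw [Amat_def, if_neg (by omega)]

lemma Amat_row_le (b c : ℕ) (d : ℕ → ℕ → ℕ) (i ℓ : ℕ) :
    Amat b c d i (ℓ+1) ≤ Amat b c d i ℓ := by
  by_cases h : i < b ∧ ℓ < c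
  · rw [Amat_def b c d i ℓ, if_pos h]
    omega
  · rw [Amat_zero (by omega), Amat_zero (by omega)]

lemma Amat_col_le (b c : ℕ) (d : ℕ → ℕ → ℕ) (i ℓ : ℕ) :
    Amat b c d (i+1) ℓ ≤ Amat b c d i ℓ := by
  by_cases h : i < b ∧ ℓ < c
  · rw [Amat_def b c d i ℓ, if_pos h]
    omega
  · rw [Amat_zero (by omega), Amat_zero (by omega)]

lemma Amat_anti_row (b c : ℕ) (d : ℕ → ℕ → ℕ) (i : ℕ) :
    Antitone (fun ℓ => Amat b c d i ℓ) :=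
  antitone_nat_of_succ_le (fun ℓ => Amat_row_le b c d i ℓ)

lemma Amat_anti_col (b c : ℕ) (d : ℕ → ℕ → ℕ) (ℓ : ℕ) :
    Antitone (fun i => Amat b c d i ℓ) :=
  antitone_nat_of_succ_le (fun i => Amat_col_le b c d i ℓ)

lemma Amat_unique (b c : ℕ) (d a : ℕ → ℕ → ℕ)
    (h0 : ∀ i ℓ, b ≤ i ∨ c ≤ ℓ → a i ℓ = 0)
    (hrec : ∀ i ℓ, i < b → ℓ < c → a i ℓ = d i ℓ + max (a i (ℓ+1)) (a (i+1) ℓ)) :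
    ∀ i ℓ, a i ℓ = Amat b c d i ℓ := by
  suffices h : ∀ n i ℓ, (b - i) + (c - ℓ) ≤ n → a i ℓ = Amat b c d i ℓ by
    intro i ℓ; exact h _ i ℓ le_rfl
  intro n
  induction n with
  | zero =>
    intro i ℓ hle
    rw [h0 i ℓ (by omega), Amat_zero (by omega)]
  | succ n ih =>
    intro i ℓ hle
    by_cases h : i < b ∧ ℓ < c
    · rw [hrec i ℓ h.1 h.2, Amat_def, if_pos h,
        ih i (ℓ+1) (by omega), ih (i+1) ℓ (by omega)]
    · rw [h0 i ℓ (by omega), Amat_def, if_neg h]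

namespace PlanePartition

lemma ext' {π ρ : PlanePartition} (h : π.entry = ρ.entry) : π = ρ := by
  cases π; cases ρ; cases h; rfl

lemma entry_anti_row (π : PlanePartition) (i : ℕ) : Antitone (fun j => π.entry i j) :=
  antitone_nat_of_succ_le (fun j => π.row_decr i j)

lemma entry_anti_col (π : PlanePartition) (j : ℕ) : Antitone (fun i => π.entry i j) :=
  antitone_nat_of_succ_le (fun i => π.col_decr i j)

/-- the length of the `i`-th row of the level-`(ℓ+1)` diagram of `π`. -/
noncomputable def lvl (π : PlanePartition) (i ℓ : ℕ) : ℕ :=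
  {j | ℓ + 1 ≤ π.entry i j}.ncard

lemma lvl_set_finite (π : PlanePartition) (i ℓ : ℕ) :
    {j | ℓ + 1 ≤ π.entry i j}.Finite := by
  have h1 : {j | ℓ + 1 ≤ π.entry i j} ⊆ (fun j => (i, j)) ⁻¹' {p : ℕ × ℕ | π.entry p.1 p.2 ≠ 0} := by
    intro j hj
    simp only [Set.mem_setOf_eq] at hj
    show π.entry i j ≠ 0
    omega
  exact Set.Finite.subset
    (π.finite_support.preimage (Set.injOn_of_injective (fun a b hab => by
      simpa using hab))) h1

lemma lt_lvl_iff (π : PlanePartition) (i ℓ j : ℕ) :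
    j < π.lvl i ℓ ↔ ℓ + 1 ≤ π.entry i j := by
  have := mem_lower_iff (lvl_set_finite π i ℓ)
    (fun m n hmn hn => le_trans hn (π.entry_anti_row i hmn)) j
  simp only [Set.mem_setOf_eq] at this
  rw [lvl, ← this]

lemma lvl_row_le (π : PlanePartition) (i ℓ : ℕ) : π.lvl i (ℓ+1) ≤ π.lvl i ℓ :=
  Set.ncard_le_ncard (fun j hj => by simp only [Set.mem_setOf_eq] at hj ⊢; omega)
    (lvl_set_finite π i ℓ)

lemma lvl_col_le (π : PlanePartition) (i ℓ : ℕ) : π.lvl (i+1) ℓ ≤ π.lvl i ℓ :=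
  Set.ncard_le_ncard (fun j hj => by
    simp only [Set.mem_setOf_eq] at hj ⊢
    exact le_trans hj (π.col_decr i j)) (lvl_set_finite π i ℓ)

lemma lvl_rec (π : PlanePartition) (i ℓ : ℕ) :
    π.lvl i ℓ = π.phi i (ℓ+1) + max (π.lvl i (ℓ+1)) (π.lvl (i+1) ℓ) := by
  have hset : {j | π.entry i j = ℓ+1 ∧ π.entry (i+1) j < ℓ+1}
      = Set.Ico (max (π.lvl i (ℓ+1)) (π.lvl (i+1) ℓ)) (π.lvl i ℓ) := by
    ext j
    have h1 := lt_lvl_iff π i ℓ j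
    have h2 := lt_lvl_iff π i (ℓ+1) j
    have h3 := lt_lvl_iff π (i+1) ℓ j
    simp only [Set.mem_setOf_eq, Set.mem_Ico, max_le_iff]
    omega
  have hle : max (π.lvl i (ℓ+1)) (π.lvl (i+1) ℓ) ≤ π.lvl i ℓ :=
    max_le (π.lvl_row_le i ℓ) (π.lvl_col_le i ℓ)
  rw [phi, hset, ← Finset.coe_Ico, Set.ncard_coe_finset, Nat.card_Ico]
  omega

lemma lvl_zero_of_row {π : PlanePartition} {b : ℕ} (hr : π.rowsLE b) {i : ℕ} (hi : b ≤ i)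
    (ℓ : ℕ) : π.lvl i ℓ = 0 := by
  have : {j | ℓ + 1 ≤ π.entry i j} = ∅ := by
    ext j; simp only [Set.mem_setOf_eq, Set.mem_empty_iff_false, iff_false]
    rw [hr i j hi]; omega
  rw [lvl, this, Set.ncard_empty]

lemma lvl_zero_of_entries {π : PlanePartition} {c : ℕ} (he : π.entriesLE c) {ℓ : ℕ}
    (hℓ : c ≤ ℓ) (i : ℕ) : π.lvl i ℓ = 0 := by
  have : {j | ℓ + 1 ≤ π.entry i j} = ∅ := by
    ext j; simp only [Set.mem_setOf_eq, Set.mem_empty_iff_false, iff_false]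
    have := he i j; omega
  rw [lvl, this, Set.ncard_empty]

lemma entry_eq_card {π : PlanePartition} {c : ℕ} (he : π.entriesLE c) (i j : ℕ) :
    π.entry i j = ((Finset.range c).filter (fun ℓ => j < π.lvl i ℓ)).card := by
  have h : (Finset.range c).filter (fun ℓ => j < π.lvl i ℓ) = Finset.range (π.entry i j) := by
    ext ℓ
    have h1 := lt_lvl_iff π i ℓ j
    have h2 := he i j
    simp only [Finset.mem_filter, Finset.mem_range]
    omega
  rw [h, Finset.card_range]

end PlanePartition

noncomputable def mkPP (b c : ℕ) (d : ℕ → ℕ → ℕ) : PlanePartition where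
  entry i j := ((Finset.range c).filter (fun ℓ => j < Amat b c d i ℓ)).card
  row_decr i j := Finset.card_le_card (Finset.monotone_filter_right _
    (fun ℓ hℓ => by omega))
  col_decr i j := Finset.card_le_card (Finset.monotone_filter_right _
    (fun ℓ _ hℓ => lt_of_lt_of_le hℓ (Amat_col_le b c d i ℓ)))
  finite_support := by
    apply Set.Finite.subset (Set.Finite.prod (Set.finite_Iio b) (Set.finite_Iio (Amat b c d 0 0)))
    rintro ⟨i, j⟩ hp
    simp only [Set.mem_setOf_eq] at hp
    obtain ⟨ℓ, hℓ⟩ := Finset.card_pos.mp (Nat.pos_of_ne_zero hp)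
    simp only [Finset.mem_filter, Finset.mem_range] at hℓ
    have hib : i < b := by
      by_contra hib
      rw [Amat_zero (Or.inl (le_of_not_gt hib))] at hℓ
      omega
    have h1 : Amat b c d i ℓ ≤ Amat b c d i 0 := Amat_anti_row b c d i (Nat.zero_le ℓ)
    have h2 : Amat b c d i 0 ≤ Amat b c d 0 0 := Amat_anti_col b c d 0 (Nat.zero_le i)
    exact ⟨hib, by simp only [Set.mem_Iio]; omega⟩

lemma mkPP_mem (b c : ℕ) (d : ℕ → ℕ → ℕ) : mkPP b c d ∈ PPinf b c := by
  constructor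
  · intro i j hi
    show ((Finset.range c).filter _).card = 0
    rw [Finset.card_eq_zero, Finset.filter_eq_empty_iff]
    intro ℓ _
    rw [Amat_zero (Or.inl hi)]
    omega
  · intro i j
    calc ((Finset.range c).filter (fun ℓ => j < Amat b c d i ℓ)).card
        ≤ (Finset.range c).card := Finset.card_le_card (Finset.filter_subset _ _)
      _ = c := Finset.card_range c

lemma mkPP_entry_iff (b c : ℕ) (d : ℕ → ℕ → ℕ) (i ℓ j : ℕ) :
    ℓ + 1 ≤ (mkPP b c d).entry i j ↔ j < Amat b c d i ℓ := by
  -- the filter set is a lower set in ℓ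
  set S : Set ℕ := ↑((Finset.range c).filter (fun ℓ => j < Amat b c d i ℓ)) with hS
  have hmem := mem_lower_iff (S := S) (Finset.finite_toSet _)
    (fun m n hmn hn => by
      simp only [hS, Finset.coe_filter, Set.mem_setOf_eq, Finset.mem_range] at hn ⊢
      exact ⟨lt_of_le_of_lt hmn hn.1, lt_of_lt_of_le hn.2 (Amat_anti_row b c d i hmn)⟩) ℓ
  rw [hS, Set.ncard_coe_finset] at hmem
  have hmem2 : ℓ ∈ S ↔ (ℓ < c ∧ j < Amat b c d i ℓ) := by
    simp [hS, Finset.coe_filter]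
  show ℓ + 1 ≤ ((Finset.range c).filter _).card ↔ _
  rw [← Nat.lt_iff_add_one_le, ← hmem, hmem2]
  constructor
  · exact fun h => h.2
  · intro h
    refine ⟨?_, h⟩
    by_contra hc
    rw [Amat_zero (Or.inr (le_of_not_gt hc))] at h
    omega

lemma mkPP_lvl (b c : ℕ) (d : ℕ → ℕ → ℕ) (i ℓ : ℕ) :
    (mkPP b c d).lvl i ℓ = Amat b c d i ℓ := by
  have h : {j | ℓ + 1 ≤ (mkPP b c d).entry i j} = Set.Iio (Amat b c d i ℓ) := by
    ext j
    rw [Set.mem_setOf_eq, mkPP_entry_iff, Set.mem_Iio]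
  rw [PlanePartition.lvl, h, ← Finset.coe_Iio, Set.ncard_coe_finset, Nat.card_Iio]

lemma mkPP_phi (b c : ℕ) (d : ℕ → ℕ → ℕ) {i ℓ : ℕ} (hi : i < b) (hℓ : ℓ < c) :
    (mkPP b c d).phi i (ℓ+1) = d i ℓ := by
  have h1 := (mkPP b c d).lvl_rec i ℓ
  rw [mkPP_lvl, mkPP_lvl, mkPP_lvl] at h1
  rw [Amat_def b c d i ℓ, if_pos ⟨hi, hℓ⟩] at h1
  omega

lemma mkPP_eq_self {b c : ℕ} {π : PlanePartition} (hπ : π ∈ PPinf b c) (d : ℕ → ℕ → ℕ)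
    (hd : ∀ i ℓ, i < b → ℓ < c → d i ℓ = π.phi i (ℓ+1)) :
    mkPP b c d = π := by
  obtain ⟨hr, he⟩ := hπ
  have hA : ∀ i ℓ, π.lvl i ℓ = Amat b c d i ℓ := by
    apply Amat_unique
    · intro i ℓ h
      rcases h with h | h
      · exact PlanePartition.lvl_zero_of_row hr h ℓ
      · exact PlanePartition.lvl_zero_of_entries he h i
    · intro i ℓ hi hℓ
      rw [hd i ℓ hi hℓ]
      exact π.lvl_rec i ℓ
  apply PlanePartition.ext'
  funext i j
  show ((Finset.range c).filter (fun ℓ => j < Amat b c d i ℓ)).card = π.entry i j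
  rw [PlanePartition.entry_eq_card he i j]
  congr 1
  ext ℓ
  simp only [Finset.mem_filter, Finset.mem_range, hA]

noncomputable def ppEquiv (b c : ℕ) : (Fin b × Fin c → ℕ) ≃ PPinf b c where
  toFun w := ⟨mkPP b c (matExt w), mkPP_mem b c (matExt w)⟩
  invFun π p := π.1.phi p.1 (p.2 + 1)
  left_inv w := by
    funext p
    obtain ⟨i, ℓ⟩ := p
    show (mkPP b c (matExt w)).phi i (ℓ + 1) = w (i, ℓ)
    rw [mkPP_phi b c (matExt w) i.isLt ℓ.isLt]
    simp [matExt, i.isLt, ℓ.isLt]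
  right_inv π := by
    apply Subtype.ext
    show mkPP b c _ = π.1
    apply mkPP_eq_self π.2
    intro i ℓ hi hℓ
    simp [matExt, hi, hℓ]

lemma des_finite (π : PlanePartition) : π.des.Finite := by
  apply π.finite_support.subset
  rintro ⟨i, j⟩ hp
  simp only [PlanePartition.des, Set.mem_setOf_eq] at hp ⊢
  omega

lemma desWeight_eq_prod {b c : ℕ} {π : PlanePartition} (hπ : π ∈ PPinf b c) (q : ℕ → ℝ) :
    desWeight π q
      = ∏ p ∈ Finset.range b ×ˢ Finset.range c, q p.2 ^ π.phi p.1 (p.2 + 1) := by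
  obtain ⟨hr, he⟩ := hπ
  classical
  set D := (des_finite π).toFinset with hD
  have hmemD : ∀ p, p ∈ D ↔ π.entry (p.1 + 1) p.2 < π.entry p.1 p.2 := by
    intro p
    rw [hD, Set.Finite.mem_toFinset]
    rfl
  have hmaps : ∀ p ∈ D, (fun p : ℕ × ℕ => (p.1, π.entry p.1 p.2 - 1)) p
      ∈ Finset.range b ×ˢ Finset.range c := by
    intro p hp
    rw [hmemD] at hp
    have h1 := he p.1 p.2
    have h2 : p.1 < b := by
      by_contra hb
      rw [hr p.1 p.2 (le_of_not_gt hb)] at hp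
      omega
    simp only [Finset.mem_product, Finset.mem_range]
    exact ⟨h2, by omega⟩
  rw [desWeight, finprod_mem_eq_finite_toFinset_prod _ (des_finite π)]
  rw [← Finset.prod_fiberwise_of_maps_to hmaps]
  apply Finset.prod_congr rfl
  rintro ⟨i, ℓ⟩ hy
  simp only [Finset.mem_product, Finset.mem_range] at hy
  rw [Finset.prod_congr rfl (g := fun _ => q ℓ) (fun p hp => by
    simp only [Finset.mem_filter, Prod.mk.injEq] at hp
    rw [hp.2.2]), Finset.prod_const]
  congr 1
  -- card of fiber = phi
  have hfin : {j | π.entry i j = ℓ + 1 ∧ π.entry (i + 1) j < ℓ + 1}.Finite := by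
    apply (π.lvl_set_finite i ℓ).subset
    intro j hj
    simp only [Set.mem_setOf_eq] at hj ⊢
    omega
  rw [PlanePartition.phi, Set.ncard_eq_toFinset_card _ hfin]
  apply Finset.card_bij (fun (p : ℕ × ℕ) _ => p.2)
  · rintro ⟨i', j⟩ hp
    simp only [Finset.mem_filter, Prod.mk.injEq] at hp
    obtain ⟨hpD, hp1, hp2⟩ := hp
    rw [hmemD] at hpD
    simp only at hpD hp1 hp2
    subst hp1
    simp only [Set.Finite.mem_toFinset, Set.mem_setOf_eq]
    omega
  · rintro ⟨i1, j1⟩ h1 ⟨i2, j2⟩ h2 hj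
    simp only [Finset.mem_filter, Prod.mk.injEq] at h1 h2
    simp only at hj
    simp only [Prod.mk.injEq]
    exact ⟨h1.2.1.trans h2.2.1.symm, hj⟩
  · intro j hj
    simp only [Set.Finite.mem_toFinset, Set.mem_setOf_eq] at hj
    refine ⟨(i, j), ?_, rfl⟩
    refine Finset.mem_filter.mpr ⟨(hmemD (i, j)).mpr ?_, ?_⟩
    · show π.entry (i + 1) j < π.entry i j
      omega
    · show (i, π.entry i j - 1) = (i, ℓ)
      rw [Prod.mk.injEq]
      exact ⟨rfl, by omega⟩

lemma tsum_pi_fin : ∀ (n : ℕ) (f : Fin n → ℕ → ℝ),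
    (∀ i k, 0 ≤ f i k) → (∀ i, Summable (f i)) →
    Summable (fun g : Fin n → ℕ => ∏ i, f i (g i)) ∧
    (∑' g : Fin n → ℕ, ∏ i, f i (g i)) = ∏ i, ∑' k, f i k := by
  intro n
  induction n with
  | zero =>
    intro f _ _
    constructor
    · apply summable_of_finite_support
      exact Set.toFinite _
    · rw [tsum_eq_single (fun _ => 0) (fun g hg => absurd (Subsingleton.elim g _) hg)]
      simp
  | succ n ih =>
    intro f hnn hsum
    obtain ⟨ihS, ihT⟩ := ih (fun i => f i.succ) (fun i k => hnn i.succ k) (fun i => hsum i.succ)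
    set E : (Fin (n+1) → ℕ) ≃ ℕ × (Fin n → ℕ) := (Fin.consEquiv (fun _ : Fin (n+1) => ℕ)).symm
      with hE
    set F : ℕ × (Fin n → ℕ) → ℝ := fun p => f 0 p.1 * ∏ i, f i.succ (p.2 i) with hF
    have h1 : (0 : ℕ → ℝ) ≤ f 0 := fun k => hnn 0 k
    have h2 : (0 : (Fin n → ℕ) → ℝ) ≤ fun g : Fin n → ℕ => ∏ i, f i.succ (g i) :=
      fun g => Finset.prod_nonneg fun i _ => hnn i.succ (g i)
    have hFs : Summable F := by
      have := Summable.mul_of_nonneg (hsum 0) ihS h1 h2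
      exact this
    have hcomp : (fun g : Fin (n+1) → ℕ => ∏ i, f i (g i)) = F ∘ E := by
      funext g
      show ∏ i, f i (g i) = F (E g)
      have hEg : E g = (g 0, Fin.tail g) := rfl
      rw [hEg, hF]
      rw [Fin.prod_univ_succ]
      rfl
    have hsec : ∀ k : ℕ, Summable (fun g : Fin n → ℕ => F (k, g)) := by
      intro k
      have := ihS.mul_left (f 0 k)
      exact this
    constructor
    · rw [hcomp]
      exact E.summable_iff.mpr hFs
    · rw [hcomp]
      have h1' : ∑' g : Fin (n+1) → ℕ, (F ∘ E) g = ∑' p, F p := E.tsum_eq F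
      rw [h1', Summable.tsum_prod' hFs hsec]
      have h2' : ∀ k : ℕ, ∑' g : Fin n → ℕ, F (k, g)
          = f 0 k * ∏ i : Fin n, ∑' m, f i.succ m := by
        intro k
        show ∑' g : Fin n → ℕ, f 0 k * ∏ i, f i.succ (g i) = _
        rw [ihS.tsum_mul_left, ihT]
      simp only [h2']
      rw [(hsum 0).tsum_mul_right, Fin.prod_univ_succ]

lemma tsum_pi_fintype {ι : Type} [Fintype ι] (f : ι → ℕ → ℝ)
    (hnn : ∀ i k, 0 ≤ f i k) (hsum : ∀ i, Summable (f i)) :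
    Summable (fun g : ι → ℕ => ∏ i, f i (g i)) ∧
    (∑' g : ι → ℕ, ∏ i, f i (g i)) = ∏ i, ∑' k, f i k := by
  set n := Fintype.card ι with hn
  set e : ι ≃ Fin n := Fintype.equivFin ι with he
  set E : (ι → ℕ) ≃ (Fin n → ℕ) := Equiv.arrowCongr e (Equiv.refl ℕ) with hE
  obtain ⟨hS, hT⟩ := tsum_pi_fin n (fun j => f (e.symm j)) (fun j k => hnn _ k)
    (fun j => hsum _)
  have hcomp : (fun g : ι → ℕ => ∏ i, f i (g i))
      = (fun h : Fin n → ℕ => ∏ j, f (e.symm j) (h j)) ∘ E := by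
    funext g
    show ∏ i, f i (g i) = ∏ j, f (e.symm j) ((E g) j)
    have h1 : ∀ j, (E g) j = g (e.symm j) := fun j => rfl
    simp only [h1]
    exact (Equiv.prod_comp e.symm (fun i => f i (g i))).symm
  constructor
  · rw [hcomp]
    exact E.summable_iff.mpr hS
  · rw [hcomp]
    have h1 : ∑' g : ι → ℕ, ((fun h : Fin n → ℕ => ∏ j, f (e.symm j) (h j)) ∘ E) g
        = ∑' h : Fin n → ℕ, ∏ j, f (e.symm j) (h j) := by
      exact E.tsum_eq (fun h : Fin n → ℕ => ∏ j, f (e.symm j) (h j))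
    rw [h1, hT]
    exact Equiv.prod_comp e.symm (fun i => ∑' k, f i k)

lemma desWeight_ppEquiv (b c : ℕ) (q : ℕ → ℝ) (w : Fin b × Fin c → ℕ) :
    desWeight ((ppEquiv b c) w).1 q = ∏ p : Fin b × Fin c, q p.2 ^ w p := by
  show desWeight (mkPP b c (matExt w)) q = _
  rw [desWeight_eq_prod (mkPP_mem b c (matExt w)) q]
  rw [Finset.prod_product]
  rw [Fintype.prod_prod_type]
  rw [← Fin.prod_univ_eq_prod_range
    (fun i => ∏ ℓ ∈ Finset.range c, q ℓ ^ (mkPP b c (matExt w)).phi i (ℓ + 1)) b]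
  apply Finset.prod_congr rfl
  intro i _
  rw [← Fin.prod_univ_eq_prod_range
    (fun ℓ => q ℓ ^ (mkPP b c (matExt w)).phi i (ℓ + 1)) c]
  apply Finset.prod_congr rfl
  intro ℓ _
  rw [mkPP_phi b c (matExt w) i.isLt ℓ.isLt]
  congr 1
  simp [matExt, i.isLt, ℓ.isLt]

/-- Normalization of the `g`-measure: for `q_1,…,q_c ∈ [0,1)` the family
`(∏_{(i,j)∈Des(π)} q_{π_{ij}})` over `π ∈ PP(∞,b,c)` is summable with sum
`∏_{i=1}^{c} (1 − q_i)^{−b}`. -/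
theorem gMeasure_normalization (b c : ℕ) (hb : 0 < b) (hc : 0 < c) (q : ℕ → ℝ)
    (hq : ∀ i < c, q i ∈ Set.Ico (0 : ℝ) 1) :
    Summable (fun π : PPinf b c => desWeight π.1 q) ∧
    ∑' π : PPinf b c, desWeight π.1 q
      = ∏ i ∈ Finset.range c, (1 - q i)⁻¹ ^ b := by
  have hq0 : ∀ p : Fin b × Fin c, 0 ≤ q p.2 := fun p => (hq p.2 p.2.isLt).1
  have hq1 : ∀ p : Fin b × Fin c, q p.2 < 1 := fun p => (hq p.2 p.2.isLt).2
  obtain ⟨hS, hT⟩ := tsum_pi_fintype (ι := Fin b × Fin c) (fun p k => q p.2 ^ k)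
    (fun p k => pow_nonneg (hq0 p) k)
    (fun p => summable_geometric_of_lt_one (hq0 p) (hq1 p))
  have hcomp : (fun π : PPinf b c => desWeight π.1 q) ∘ (ppEquiv b c)
      = fun w : Fin b × Fin c → ℕ => ∏ p, q p.2 ^ w p := by
    funext w
    exact desWeight_ppEquiv b c q w
  have hprod : (∏ p : Fin b × Fin c, ∑' k : ℕ, q p.2 ^ k)
      = ∏ i ∈ Finset.range c, (1 - q i)⁻¹ ^ b := by
    rw [Fintype.prod_prod_type]
    have h1 : ∀ i : Fin b, (∏ j : Fin c, ∑' k : ℕ, q j ^ k)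
        = ∏ j ∈ Finset.range c, (1 - q j)⁻¹ := by
      intro i
      rw [← Fin.prod_univ_eq_prod_range (fun j => (1 - q j)⁻¹) c]
      exact Finset.prod_congr rfl fun j _ =>
        tsum_geometric_of_lt_one (hq0 (i, j)) (hq1 (i, j))
    rw [Finset.prod_congr rfl (fun i _ => h1 i), Finset.prod_const, Finset.card_univ,
      Fintype.card_fin, ← Finset.prod_pow]
  constructor
  · exact ((ppEquiv b c).summable_iff).mp (by rw [hcomp]; exact hS)
  · rw [← (ppEquiv b c).tsum_eq (fun π : PPinf b c => desWeight π.1 q)]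
    have := tsum_congr (L := SummationFilter.unconditional _) (fun w => desWeight_ppEquiv b c q w)
    rw [this, hT, hprod]
end
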